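/- arXiv:gr-qc/0606044 — 3 statements merged into one kernel-verified Lean document; each statement's English description precedes it below -/
import Mathlib

section
/- Let G be a real symmetric 4×4 matrix in emission form with det G < 0, and let K = G⁻¹. Then for every triple of distinct indices A, B, C, the 3×3 principal submatrix of K on rows and columns {A, B, C} is negative semidefinite and has determinant zero (it has rank 2). (Geometrically: each 3-space spanned by a triad of natural vectors of emission coordinates is null.) -/
/-- A real matrix is negative semidefinite if it is symmetric and the associated
quadratic form is nonpositive. -/
def Matrix.NegSemidefR {n : ℕ} (M : Matrix (Fin n) (Fin n) ℝ) : Prop :=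
  M.IsSymm ∧ ∀ x : Fin n → ℝ, dotProduct x (M.mulVec x) ≤ 0

/-!
Move the missing index `D` of the triad to the last position by a permutation. For
`N = (G⁻¹)_{SS}` with `S` the other three indices, the identity `G⁻¹ G = 1` together with
`G D D = 0` shows that `ker N` is spanned by the column `(G i D)_{i ∈ S}`, which is nonzero;
hence `det N = 0` and `rank N = 2`. For the sign, extend `z` by zero to `x` and put
`y = G⁻¹ x`: then `z ⬝ N z = y ⬝ G y` and `(G y)_D = 0`. On that hyperplane the form of an
emission matrix reduces to a binary form with leading coefficient of fixed sign and
discriminant `det G`, so it is nonpositive when `det G < 0`.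
-/

open Function Matrix Module

namespace Matrix

variable {ι κ : Type*}

structure IsEmissionForm (G : Matrix ι ι ℝ) : Prop where
  isSymm : G.IsSymm
  diag_eq_zero : ∀ i, G i i = 0
  pos_of_ne : ∀ i j, i ≠ j → 0 < G i j

theorem IsEmissionForm.submatrix {G : Matrix ι ι ℝ} (hG : G.IsEmissionForm) {f : κ → ι}
    (hf : Injective f) : (G.submatrix f f).IsEmissionForm where
  isSymm := hG.isSymm.submatrix f
  diag_eq_zero i := hG.diag_eq_zero (f i)
  pos_of_ne i j hij := hG.pos_of_ne (f i) (f j) (hf.ne hij)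

theorem rank_add_one_of_ker_eq_span_singleton {𝕜 : Type*} [Field 𝕜] [Fintype κ]
    {N : Matrix κ κ 𝕜} {v : κ → 𝕜} (hv : v ≠ 0)
    (hker : LinearMap.ker N.mulVecLin = 𝕜 ∙ v) : N.rank + 1 = Fintype.card κ := by
  rw [← finrank_span_singleton (K := 𝕜) hv, ← hker, rank,
    LinearMap.finrank_range_add_finrank_ker, finrank_fintype_fun_eq_card]

section LastIndex

variable {n : ℕ}

theorem mulVec_snoc_zero_castSucc {R : Type*} [NonUnitalNonAssocSemiring R]
    (M : Matrix (Fin (n + 1)) (Fin (n + 1)) R) (z : Fin n → R) (i : Fin n) :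
    (M *ᵥ Fin.snoc z 0) i.castSucc = (M.submatrix Fin.castSucc Fin.castSucc *ᵥ z) i := by
  simp [mulVec, dotProduct, Fin.sum_univ_castSucc]

theorem snoc_zero_dotProduct_mulVec {R : Type*} [NonUnitalNonAssocSemiring R]
    (M : Matrix (Fin (n + 1)) (Fin (n + 1)) R) (z : Fin n → R) :
    Fin.snoc z 0 ⬝ᵥ (M *ᵥ Fin.snoc z 0)
      = z ⬝ᵥ (M.submatrix Fin.castSucc Fin.castSucc *ᵥ z) := by
  simp [dotProduct, Fin.sum_univ_castSucc, mulVec_snoc_zero_castSucc]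

variable {𝕜 : Type*} [Field 𝕜] {G : Matrix (Fin (n + 1)) (Fin (n + 1)) 𝕜}

theorem inv_submatrix_castSucc_mulVec_col_last (hG : IsUnit G.det)
    (hlast : G (Fin.last n) (Fin.last n) = 0) :
    G⁻¹.submatrix Fin.castSucc Fin.castSucc *ᵥ (fun i ↦ G i.castSucc (Fin.last n)) = 0 := by
  ext i
  have h := congr_fun (congr_fun (G.nonsing_inv_mul hG) i.castSucc) (Fin.last n)
  rw [mul_apply, Fin.sum_univ_castSucc, hlast, mul_zero, add_zero,
    one_apply_ne (Fin.castSucc_ne_last i)] at h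
  simpa [mulVec, dotProduct] using h

theorem exists_eq_smul_col_last_of_inv_submatrix_castSucc_mulVec_eq_zero (hG : IsUnit G.det)
    {z : Fin n → 𝕜} (hz : G⁻¹.submatrix Fin.castSucc Fin.castSucc *ᵥ z = 0) :
    ∃ t : 𝕜, t • (fun i ↦ G i.castSucc (Fin.last n)) = z := by
  set y := G⁻¹ *ᵥ Fin.snoc z 0
  have hy : y = Pi.single (Fin.last n) (y (Fin.last n)) := by
    ext j
    induction j using Fin.lastCases with
    | last => simp
    | cast i => simp [y, mulVec_snoc_zero_castSucc, hz, Fin.castSucc_ne_last]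
  refine ⟨y (Fin.last n), funext fun i ↦ ?_⟩
  have hx : G *ᵥ y = Fin.snoc z 0 := by simp [y, mulVec_mulVec, G.mul_nonsing_inv hG]
  have := congr_fun hx i.castSucc
  rw [hy, mulVec_single] at this
  simpa [mul_comm] using this

theorem ker_inv_submatrix_castSucc (hG : IsUnit G.det)
    (hlast : G (Fin.last n) (Fin.last n) = 0) :
    LinearMap.ker (G⁻¹.submatrix Fin.castSucc Fin.castSucc).mulVecLin
      = 𝕜 ∙ fun i ↦ G i.castSucc (Fin.last n) := by
  ext z
  simp only [LinearMap.mem_ker, mulVecLin_apply, Submodule.mem_span_singleton]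
  constructor
  · exact exists_eq_smul_col_last_of_inv_submatrix_castSucc_mulVec_eq_zero hG
  · rintro ⟨t, rfl⟩
    rw [mulVec_smul, inv_submatrix_castSucc_mulVec_col_last hG hlast, smul_zero]

theorem inv_submatrix_castSucc_dotProduct_mulVec_nonpos [LE 𝕜] (hG : IsUnit G.det)
    (hneg : ∀ y, (G *ᵥ y) (Fin.last n) = 0 → y ⬝ᵥ (G *ᵥ y) ≤ 0) (z : Fin n → 𝕜) :
    z ⬝ᵥ (G⁻¹.submatrix Fin.castSucc Fin.castSucc *ᵥ z) ≤ 0 := by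
  rw [← snoc_zero_dotProduct_mulVec]
  have hx : G *ᵥ (G⁻¹ *ᵥ Fin.snoc z 0) = Fin.snoc z 0 := by
    rw [mulVec_mulVec, G.mul_nonsing_inv hG, one_mulVec]
  calc Fin.snoc z 0 ⬝ᵥ (G⁻¹ *ᵥ Fin.snoc z 0)
      = (G⁻¹ *ᵥ Fin.snoc z 0) ⬝ᵥ (G *ᵥ (G⁻¹ *ᵥ Fin.snoc z 0)) := by
        rw [hx, dotProduct_comm]
    _ ≤ 0 := hneg _ (by rw [hx]; simp)

end LastIndex

theorem det_fin_four_of_isSymm_of_diag_eq_zero {G : Matrix (Fin 4) (Fin 4) ℝ} (hG : G.IsSymm)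
    (hdiag : ∀ i, G i i = 0) :
    G.det = (G 0 1 * G 2 3) ^ 2 + (G 0 2 * G 1 3) ^ 2 + (G 0 3 * G 1 2) ^ 2
      - 2 * (G 0 1 * G 2 3) * (G 0 2 * G 1 3) - 2 * (G 0 2 * G 1 3) * (G 0 3 * G 1 2)
      - 2 * (G 0 3 * G 1 2) * (G 0 1 * G 2 3) := by
  have h : ∀ i j, G j i = G i j := fun i j ↦ hG.apply i j
  simp [det_succ_row_zero, Fin.sum_univ_succ, Fin.succAbove, hdiag, h 1 0, h 2 0, h 3 0, h 2 1,
    h 3 1, h 3 2]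
  ring

theorem IsEmissionForm.dotProduct_mulVec_nonpos_of_mulVec_three_eq_zero
    {G : Matrix (Fin 4) (Fin 4) ℝ} (hG : G.IsEmissionForm) (hdet : G.det < 0)
    {y : Fin 4 → ℝ} (hy : (G *ᵥ y) 3 = 0) :
    y ⬝ᵥ (G *ᵥ y) ≤ 0 := by
  have h : ∀ i j, G j i = G i j := fun i j ↦ hG.isSymm.apply i j
  have hy' : G 0 3 * y 0 + G 1 3 * y 1 + G 2 3 * y 2 = 0 := by
    simpa [mulVec, dotProduct, Fin.sum_univ_four, hG.diag_eq_zero, h 0 3, h 1 3, h 2 3] using hy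
  -- `det G = m ^ 2 - 4 (G 0 2 * G 1 3) (G 0 3 * G 1 2)` is the discriminant of the binary form
  -- obtained by eliminating `y 2` and `y 3`.
  set m := G 0 1 * G 2 3 - G 0 2 * G 1 3 - G 0 3 * G 1 2
  have key : 2 * G 0 2 * G 0 3 * G 2 3 * (y ⬝ᵥ (G *ᵥ y))
      = -(2 * G 0 2 * G 0 3 * y 0 - m * y 1) ^ 2 + G.det * y 1 ^ 2 := by
    rw [det_fin_four_of_isSymm_of_diag_eq_zero hG.isSymm hG.diag_eq_zero]
    simp only [mulVec, dotProduct, Fin.sum_univ_four, hG.diag_eq_zero, h 0 1, h 0 2, h 0 3,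
      h 1 2, h 1 3, h 2 3]
    linear_combination 4 * G 0 2 * G 0 3 * (G 0 2 * y 0 + G 1 2 * y 1 + G 2 3 * y 3) * hy'
  have hcoef : 0 < 2 * G 0 2 * G 0 3 * G 2 3 := by
    have := hG.pos_of_ne 0 2 (by decide)
    have := hG.pos_of_ne 0 3 (by decide)
    have := hG.pos_of_ne 2 3 (by decide)
    positivity
  have hrhs : -(2 * G 0 2 * G 0 3 * y 0 - m * y 1) ^ 2 + G.det * y 1 ^ 2 ≤ 0 := by
    nlinarith [sq_nonneg (2 * G 0 2 * G 0 3 * y 0 - m * y 1), sq_nonneg (y 1)]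
  exact nonpos_of_mul_nonpos_right (key ▸ hrhs) hcoef

theorem IsEmissionForm.inv_submatrix_castSucc {G : Matrix (Fin 4) (Fin 4) ℝ}
    (hG : G.IsEmissionForm) (hdet : G.det < 0) :
    (G⁻¹.submatrix Fin.castSucc Fin.castSucc).NegSemidefR
      ∧ (G⁻¹.submatrix Fin.castSucc Fin.castSucc).det = 0
      ∧ (G⁻¹.submatrix Fin.castSucc Fin.castSucc).rank = 2 := by
  have hunit : IsUnit G.det := hdet.ne.isUnit
  have hlast : G (Fin.last 3) (Fin.last 3) = 0 := hG.diag_eq_zero _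
  have hv : (fun i : Fin 3 ↦ G i.castSucc (Fin.last 3)) ≠ 0 := fun h ↦
    (hG.pos_of_ne 2 3 (by decide)).ne' (congr_fun h 2)
  refine ⟨⟨hG.isSymm.inv.submatrix _, inv_submatrix_castSucc_dotProduct_mulVec_nonpos hunit
    fun y hy ↦ hG.dotProduct_mulVec_nonpos_of_mulVec_three_eq_zero hdet hy⟩, ?_, ?_⟩
  · exact exists_mulVec_eq_zero_iff.mp
      ⟨_, hv, inv_submatrix_castSucc_mulVec_col_last hunit hlast⟩
  · have := rank_add_one_of_ker_eq_span_singleton hv (ker_inv_submatrix_castSucc hunit hlast)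
    simpa using this

end Matrix

theorem Fin.exists_perm_comp_castSucc {n : ℕ} {f : Fin n → Fin (n + 1)} (hf : Injective f) :
    ∃ σ : Equiv.Perm (Fin (n + 1)), σ ∘ Fin.castSucc = f := by
  obtain ⟨D, hD⟩ : ∃ D, D ∉ Set.range f := by
    by_contra! h
    simpa using Fintype.card_le_of_surjective f fun D ↦ h D
  have hsnoc : Injective (Fin.snoc f D : Fin (n + 1) → Fin (n + 1)) :=
    Fin.snoc_injective_iff.mpr ⟨hf, hD⟩
  exact ⟨Equiv.ofBijective _ (Finite.injective_iff_bijective.mp hsnoc),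
    funext fun i ↦ Fin.snoc_castSucc (α := fun _ ↦ Fin (n + 1)) ..⟩

/-- If `G` is a real symmetric 4×4 matrix in emission form with
`det G < 0` and `K = G⁻¹`, then for every triple of distinct indices `A, B, C` the 3×3
principal submatrix of `K` on rows and columns `{A, B, C}` is negative semidefinite,
has determinant zero, and has rank 2: each 3-space spanned by a triad of natural
vectors is null. -/
theorem stmt_8 (G : Matrix (Fin 4) (Fin 4) ℝ)
    (hsymm : G.IsSymm) (hdiag : ∀ i, G i i = 0)
    (hpos : ∀ i j, i ≠ j → 0 < G i j) (hdet : G.det < 0) :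
    ∀ A B C : Fin 4, A ≠ B → A ≠ C → B ≠ C →
      (G⁻¹.submatrix ![A, B, C] ![A, B, C]).NegSemidefR
      ∧ (G⁻¹.submatrix ![A, B, C] ![A, B, C]).det = 0
      ∧ (G⁻¹.submatrix ![A, B, C] ![A, B, C]).rank = 2 := by
  intro A B C hAB hAC hBC
  have hG : G.IsEmissionForm := ⟨hsymm, hdiag, hpos⟩
  have hinj : Injective ![A, B, C] := by
    intro i j
    fin_cases i <;> fin_cases j <;> simp [hAB, hAC, hBC, hAB.symm, hAC.symm, hBC.symm]
  obtain ⟨σ, hσ⟩ := Fin.exists_perm_comp_castSucc hinj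
  rw [← hσ, ← submatrix_submatrix, ← inv_submatrix_equiv]
  exact (hG.submatrix σ.injective).inv_submatrix_castSucc (by rwa [det_submatrix_equiv_self])
end

section
/- Let G be a real symmetric 4×4 matrix in emission form with det G < 0, let K = G⁻¹, and let A = √(G₂₃G₁₄), B = √(G₁₃G₂₄), C = √(G₁₂G₃₄). Then the cosines of the angles between the natural vectors are given by: −K₂₃/(√(−K₂₂)·√(−K₃₃)) = (A² − B² − C²)/(2BC), −K₁₃/(√(−K₁₁)·√(−K₃₃)) = (B² − A² − C²)/(2AC), and −K₁₂/(√(−K₁₁)·√(−K₂₂)) = (C² − A² − B²)/(2AB). -/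
/-!
Since `G⁻¹ = (det G)⁻¹ • adj G` with `det G < 0`, the positive factor `-(det G)⁻¹` cancels from
`-Kᵢⱼ / (√(-Kᵢᵢ) √(-Kⱼⱼ))`, which therefore equals `adjᵢⱼ / (√adjᵢᵢ √adjⱼⱼ)`. For a matrix in
emission form, `adjᵢᵢ` is twice the product of the three entries avoiding index `i`, and for
`{i, j, k, l} = {1, 2, 3, 4}` one has `adjᵢⱼ = Gₖₗ (GᵢⱼGₖₗ - GᵢₖGⱼₗ - GᵢₗGⱼₖ)`. For instance
`adj₂₃ = G₁₄ (A² - B² - C²)` and `adj₂₂ adj₃₃ = (2 G₁₄ B C)²`, so the factor `G₁₄` cancels as well.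
-/

open Matrix Real

theorem Matrix.neg_inv_div_sqrt_eq_adjugate_div_sqrt {n : Type*} [Fintype n] [DecidableEq n]
    (G : Matrix n n ℝ) (hdet : G.det < 0) (i j : n) :
    -G⁻¹ i j / (√(-G⁻¹ i i) * √(-G⁻¹ j j)) =
      G.adjugate i j / (√(G.adjugate i i) * √(G.adjugate j j)) := by
  set t := -G.det⁻¹
  have ht : 0 < t := neg_pos.mpr (inv_lt_zero.mpr hdet)
  have hinv (k l : n) : -G⁻¹ k l = t * G.adjugate k l := by
    simp [inv_def, Ring.inverse_eq_inv', t]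
  have hsqrt (k l : n) : √(t * G.adjugate k l) = √t * √(G.adjugate k l) := sqrt_mul ht.le _
  rw [hinv, hinv, hinv, hsqrt, hsqrt,
    show √t * √(G.adjugate i i) * (√t * √(G.adjugate j j))
      = (√t * √t) * (√(G.adjugate i i) * √(G.adjugate j j)) by ring,
    mul_self_sqrt ht.le, mul_div_mul_left _ _ ht.ne']

theorem mul_div_sqrt_mul_sqrt {p u v P Q : ℝ} (hp : 0 < p) (hu : 0 ≤ u) (hP : 0 ≤ P)
    (h : P * Q = (2 * p) ^ 2 * u * v) (x : ℝ) :
    p * x / (√P * √Q) = x / (2 * √u * √v) := by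
  have hPQ : √P * √Q = p * (2 * √u * √v) := by
    rw [← sqrt_mul hP, h, sqrt_mul (by positivity), sqrt_mul (by positivity),
      sqrt_sq (by positivity)]
    ring
  rw [hPQ, mul_div_mul_left _ _ hp.ne']

def emissionMatrix (a b c d e f : ℝ) : Matrix (Fin 4) (Fin 4) ℝ :=
  !![0, a, b, c; a, 0, d, e; b, d, 0, f; c, e, f, 0]

theorem eq_emissionMatrix {G : Matrix (Fin 4) (Fin 4) ℝ} (hsymm : G.IsSymm)
    (hdiag : ∀ i, G i i = 0) :
    G = emissionMatrix (G 0 1) (G 0 2) (G 0 3) (G 1 2) (G 1 3) (G 2 3) := by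
  ext i j
  fin_cases i <;> fin_cases j <;> simp [emissionMatrix, hdiag] <;> exact hsymm.apply _ _

theorem adjugate_emissionMatrix (a b c d e f : ℝ) :
    (emissionMatrix a b c d e f).adjugate =
      !![2 * d * e * f, f * (a * f - d * c - b * e), e * (b * e - d * c - a * f),
          d * (d * c - b * e - a * f);
        f * (a * f - d * c - b * e), 2 * b * c * f, c * (d * c - b * e - a * f),
          b * (b * e - d * c - a * f);
        e * (b * e - d * c - a * f), c * (d * c - b * e - a * f), 2 * a * c * e,
          a * (a * f - d * c - b * e);
        d * (d * c - b * e - a * f), b * (b * e - d * c - a * f), a * (a * f - d * c - b * e),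
          2 * a * b * d] := by
  ext i j
  rw [adjugate_fin_succ_eq_det_submatrix, det_fin_three]
  fin_cases i <;> fin_cases j <;> simp [emissionMatrix, Fin.succAbove] <;> ring

theorem cosines_of_eq_emissionMatrix {G : Matrix (Fin 4) (Fin 4) ℝ} {a b c d e f : ℝ}
    (ha : 0 < a) (hb : 0 < b) (hc : 0 < c) (hd : 0 < d) (he : 0 < e) (hf : 0 < f)
    (hG : G = emissionMatrix a b c d e f) (hdet : G.det < 0) :
    -(G⁻¹ 1 2) / (√(-(G⁻¹ 1 1)) * √(-(G⁻¹ 2 2)))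
      = (√(d * c) ^ 2 - √(b * e) ^ 2 - √(a * f) ^ 2) / (2 * √(b * e) * √(a * f))
    ∧ -(G⁻¹ 0 2) / (√(-(G⁻¹ 0 0)) * √(-(G⁻¹ 2 2)))
      = (√(b * e) ^ 2 - √(d * c) ^ 2 - √(a * f) ^ 2) / (2 * √(d * c) * √(a * f))
    ∧ -(G⁻¹ 0 1) / (√(-(G⁻¹ 0 0)) * √(-(G⁻¹ 1 1)))
      = (√(a * f) ^ 2 - √(d * c) ^ 2 - √(b * e) ^ 2) / (2 * √(d * c) * √(b * e)) := by
  subst hG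
  simp only [neg_inv_div_sqrt_eq_adjugate_div_sqrt _ hdet, adjugate_emissionMatrix]
  rw [sq_sqrt (by positivity), sq_sqrt (by positivity), sq_sqrt (by positivity)]
  refine ⟨?_, ?_, ?_⟩ <;> simp only [of_apply, cons_val', cons_val, empty_val', cons_val_fin_one]
  · exact mul_div_sqrt_mul_sqrt hc (by positivity) (by positivity) (by ring) _
  · exact mul_div_sqrt_mul_sqrt he (by positivity) (by positivity) (by ring) _
  · exact mul_div_sqrt_mul_sqrt hf (by positivity) (by positivity) (by ring) _

/-- For a real symmetric 4×4 matrix `G` in emission form with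
`det G < 0`, `K = G⁻¹` and `A = √(G₂₃G₁₄)`, `B = √(G₁₃G₂₄)`, `C = √(G₁₂G₃₄)`,
the cosines of the angles between the natural vectors are
`−K₂₃/(√(−K₂₂)√(−K₃₃)) = (A²−B²−C²)/(2BC)`,
`−K₁₃/(√(−K₁₁)√(−K₃₃)) = (B²−A²−C²)/(2AC)`,
`−K₁₂/(√(−K₁₁)√(−K₂₂)) = (C²−A²−B²)/(2AB)`. -/
theorem stmt_14 (G : Matrix (Fin 4) (Fin 4) ℝ)
    (hsymm : G.IsSymm) (hdiag : ∀ i, G i i = 0)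
    (hpos : ∀ i j, i ≠ j → 0 < G i j) (hdet : G.det < 0) :
    -(G⁻¹ 1 2) / (Real.sqrt (-(G⁻¹ 1 1)) * Real.sqrt (-(G⁻¹ 2 2)))
      = (Real.sqrt (G 1 2 * G 0 3) ^ 2 - Real.sqrt (G 0 2 * G 1 3) ^ 2
          - Real.sqrt (G 0 1 * G 2 3) ^ 2)
        / (2 * Real.sqrt (G 0 2 * G 1 3) * Real.sqrt (G 0 1 * G 2 3))
    ∧ -(G⁻¹ 0 2) / (Real.sqrt (-(G⁻¹ 0 0)) * Real.sqrt (-(G⁻¹ 2 2)))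
      = (Real.sqrt (G 0 2 * G 1 3) ^ 2 - Real.sqrt (G 1 2 * G 0 3) ^ 2
          - Real.sqrt (G 0 1 * G 2 3) ^ 2)
        / (2 * Real.sqrt (G 1 2 * G 0 3) * Real.sqrt (G 0 1 * G 2 3))
    ∧ -(G⁻¹ 0 1) / (Real.sqrt (-(G⁻¹ 0 0)) * Real.sqrt (-(G⁻¹ 1 1)))
      = (Real.sqrt (G 0 1 * G 2 3) ^ 2 - Real.sqrt (G 1 2 * G 0 3) ^ 2
          - Real.sqrt (G 0 2 * G 1 3) ^ 2)
        / (2 * Real.sqrt (G 1 2 * G 0 3) * Real.sqrt (G 0 2 * G 1 3)) :=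
  cosines_of_eq_emissionMatrix (hpos 0 1 (by decide)) (hpos 0 2 (by decide))
    (hpos 0 3 (by decide)) (hpos 1 2 (by decide)) (hpos 1 3 (by decide)) (hpos 2 3 (by decide))
    (eq_emissionMatrix hsymm hdiag) hdet
end

section
/- Let G be a real symmetric 4×4 matrix in emission form with det G < 0, set H = −det G, and for pairwise distinct indices A, B, C, D define the scale parameters μ^A = √( H / (2·G_{BC}·G_{BD}·G_{CD}) ) > 0. Define the normalized entries Ĝ_{AB} = G_{AB}/(μ^A · μ^B) for A ≠ B. Then the normalized matrix has the paired structure Ĝ₁₄ = Ĝ₂₃ =: Â, Ĝ₁₃ = Ĝ₂₄ =: B̂, Ĝ₁₂ = Ĝ₃₄ =: Ĉ, with Â, B̂, Ĉ > 0, and these satisfy the constraint Â⁴ + B̂⁴ + Ĉ⁴ − 2Â²B̂² − 2Â²Ĉ² − 2B̂²Ĉ² + 2ÂB̂Ĉ = 0. -/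
/-!
Write `x = G₀₁G₂₃`, `y = G₀₂G₁₃`, `z = G₀₃G₁₂` for the products of opposite entries and
`P = xyz`. For a hollow symmetric 4×4 matrix, `H = -det G = 2(xy + yz + zx) - x² - y² - z²`.
From `μ_A² μ_B² = H² / (4 G_AC G_AD G_BC G_BD G_CD²)` one gets
`Ĝ_AB² = 4 (G_AB G_CD)² (G_AC G_BD)(G_AD G_BC) / H²`, which is invariant under
`{A, B} ↔ {C, D}`; this gives the pairing. Hence `Â² = 4Pz/H²`, `B̂² = 4Py/H²`,
`Ĉ² = 4Px/H²` and, by positivity, `ÂB̂Ĉ = 8P²/H³`, and the constraint reduces to the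
formula for `H`.
-/

open Real

lemma Matrix.det_fin_four_of_isSymm_of_diag_eq_zero_s19 {R : Type*} [CommRing R]
    {G : Matrix (Fin 4) (Fin 4) R} (hsymm : G.IsSymm) (hdiag : ∀ i, G i i = 0) :
    G.det = (G 0 1 * G 2 3) ^ 2 + (G 0 2 * G 1 3) ^ 2 + (G 0 3 * G 1 2) ^ 2
      - 2 * (G 0 1 * G 2 3) * (G 0 2 * G 1 3) - 2 * (G 0 2 * G 1 3) * (G 0 3 * G 1 2)
      - 2 * (G 0 3 * G 1 2) * (G 0 1 * G 2 3) := by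
  simp only [Matrix.det_succ_row_zero, Fin.sum_univ_succ]
  simp [Fin.succAbove, hdiag, hsymm.apply 0 1, hsymm.apply 0 2, hsymm.apply 0 3,
    hsymm.apply 1 2, hsymm.apply 1 3, hsymm.apply 2 3]
  ring

lemma sq_div_sqrt_mul_sqrt {H p q r s t u : ℝ} (hH : 0 < H) (hq : 0 < q) (hr : 0 < r)
    (hs : 0 < s) (ht : 0 < t) (hu : 0 < u) :
    (p / (√(H / (2 * s * t * u)) * √(H / (2 * q * r * u)))) ^ 2
      = 4 * (p * u) ^ 2 * (q * t) * (r * s) / H ^ 2 := by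
  rw [div_pow, mul_pow, sq_sqrt (by positivity), sq_sqrt (by positivity)]
  field_simp
  ring

lemma quartic_eq_zero_of_sq {x y z H a b c : ℝ} (hH : 0 < H)
    (hHxyz : H = 2 * (x * y + y * z + z * x) - x ^ 2 - y ^ 2 - z ^ 2)
    (ha : 0 ≤ a) (hb : 0 ≤ b) (hc : 0 ≤ c)
    (ha2 : a ^ 2 = 4 * z ^ 2 * x * y / H ^ 2) (hb2 : b ^ 2 = 4 * y ^ 2 * x * z / H ^ 2)
    (hc2 : c ^ 2 = 4 * x ^ 2 * y * z / H ^ 2) :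
    a ^ 4 + b ^ 4 + c ^ 4 - 2 * a ^ 2 * b ^ 2 - 2 * a ^ 2 * c ^ 2 - 2 * b ^ 2 * c ^ 2
      + 2 * a * b * c = 0 := by
  have habc : a * b * c = 8 * (x * y * z) ^ 2 / H ^ 3 := by
    rw [← sq_eq_sq₀ (by positivity) (by positivity), mul_pow, mul_pow, ha2, hb2, hc2]
    field_simp
    ring
  have hexpand : a ^ 4 + b ^ 4 + c ^ 4 - 2 * a ^ 2 * b ^ 2 - 2 * a ^ 2 * c ^ 2
      - 2 * b ^ 2 * c ^ 2 + 2 * a * b * c = (a ^ 2) ^ 2 + (b ^ 2) ^ 2 + (c ^ 2) ^ 2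
      - 2 * a ^ 2 * b ^ 2 - 2 * a ^ 2 * c ^ 2 - 2 * b ^ 2 * c ^ 2 + 2 * (a * b * c) := by ring
  rw [hexpand, ha2, hb2, hc2, habc]
  field_simp
  linear_combination (16 * (x * y * z) ^ 2) * hHxyz

section EmissionForm

def IsScaleParameter (G : Matrix (Fin 4) (Fin 4) ℝ) (μ : Fin 4 → ℝ) : Prop :=
  ∀ A B C D : Fin 4, A ≠ B → A ≠ C → A ≠ D → B ≠ C → B ≠ D → C ≠ D →
    μ A = √((-G.det) / (2 * G B C * G B D * G C D))

def IsNormalization (G : Matrix (Fin 4) (Fin 4) ℝ) (μ : Fin 4 → ℝ)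
    (Ghat : Fin 4 → Fin 4 → ℝ) : Prop :=
  ∀ A B : Fin 4, A ≠ B → Ghat A B = G A B / (μ A * μ B)

variable {G : Matrix (Fin 4) (Fin 4) ℝ} {μ : Fin 4 → ℝ} {Ghat : Fin 4 → Fin 4 → ℝ}

lemma IsScaleParameter.pos (hμ : IsScaleParameter G μ) (hpos : ∀ i j, i ≠ j → 0 < G i j)
    (hdet : G.det < 0) (A : Fin 4) : 0 < μ A := by
  obtain ⟨B, C, D, hAB, hAC, hAD, hBC, hBD, hCD⟩ :
      ∃ B C D : Fin 4, A ≠ B ∧ A ≠ C ∧ A ≠ D ∧ B ≠ C ∧ B ≠ D ∧ C ≠ D := by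
    revert A; decide
  rw [hμ A B C D hAB hAC hAD hBC hBD hCD]
  have := hpos B C hBC
  have := hpos B D hBD
  have := hpos C D hCD
  exact sqrt_pos.mpr (div_pos (neg_pos.mpr hdet) (by positivity))

lemma IsNormalization.pos (hGhat : IsNormalization G μ Ghat) (hμ : IsScaleParameter G μ)
    (hpos : ∀ i j, i ≠ j → 0 < G i j) (hdet : G.det < 0) {A B : Fin 4} (hAB : A ≠ B) :
    0 < Ghat A B := by
  rw [hGhat A B hAB]
  exact div_pos (hpos A B hAB) (mul_pos (hμ.pos hpos hdet A) (hμ.pos hpos hdet B))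

lemma IsNormalization.sq_eq (hGhat : IsNormalization G μ Ghat) (hμ : IsScaleParameter G μ)
    (hpos : ∀ i j, i ≠ j → 0 < G i j) (hdet : G.det < 0) {A B C D : Fin 4}
    (h : [A, B, C, D].Nodup) :
    Ghat A B ^ 2 = 4 * (G A B * G C D) ^ 2 * (G A C * G B D) * (G A D * G B C) / (-G.det) ^ 2 := by
  simp only [List.nodup_cons, List.mem_cons, List.not_mem_nil, List.nodup_nil, not_or] at h
  obtain ⟨⟨hAB, hAC, hAD, -⟩, ⟨hBC, hBD, -⟩, ⟨hCD, -⟩, -, -⟩ := h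
  rw [hGhat A B hAB, hμ A B C D hAB hAC hAD hBC hBD hCD,
    hμ B A C D (Ne.symm hAB) hBC hBD hAC hAD hCD]
  exact sq_div_sqrt_mul_sqrt (neg_pos.mpr hdet) (hpos A C hAC) (hpos A D hAD) (hpos B C hBC)
    (hpos B D hBD) (hpos C D hCD)

lemma IsNormalization.eq_of_nodup (hGhat : IsNormalization G μ Ghat) (hμ : IsScaleParameter G μ)
    (hsymm : G.IsSymm) (hpos : ∀ i j, i ≠ j → 0 < G i j) (hdet : G.det < 0) {A B C D : Fin 4}
    (h : [A, B, C, D].Nodup) : Ghat A B = Ghat C D := by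
  have h' : [C, D, A, B].Nodup :=
    (List.perm_append_comm (l₁ := [A, B]) (l₂ := [C, D])).nodup_iff.mp h
  have hAB : A ≠ B := fun e => by simp [e] at h
  have hCD : C ≠ D := fun e => by simp [e] at h
  rw [← sq_eq_sq₀ (hGhat.pos hμ hpos hdet hAB).le (hGhat.pos hμ hpos hdet hCD).le,
    hGhat.sq_eq hμ hpos hdet h, hGhat.sq_eq hμ hpos hdet h', hsymm.apply A C, hsymm.apply B D,
    hsymm.apply A D, hsymm.apply B C]
  ring

end EmissionForm

/-- Let `G` be a real symmetric 4×4 matrix in emission form with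
`det G < 0`, `H = −det G`, and for pairwise distinct indices `A, B, C, D` let the
scale parameter be `μ A = √(H/(2·G_{BC}·G_{BD}·G_{CD}))`. With the normalized entries
`Ĝ_{AB} = G_{AB}/(μ A · μ B)` for `A ≠ B`, each `μ A` is positive, the normalized
matrix has the paired structure `Ĝ₁₄ = Ĝ₂₃ = Â`, `Ĝ₁₃ = Ĝ₂₄ = B̂`, `Ĝ₁₂ = Ĝ₃₄ = Ĉ`
with `Â, B̂, Ĉ > 0`, and these satisfy
`Â⁴ + B̂⁴ + Ĉ⁴ − 2Â²B̂² − 2Â²Ĉ² − 2B̂²Ĉ² + 2ÂB̂Ĉ = 0`. -/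
theorem stmt_19 (G : Matrix (Fin 4) (Fin 4) ℝ)
    (hsymm : G.IsSymm) (hdiag : ∀ i, G i i = 0)
    (hpos : ∀ i j, i ≠ j → 0 < G i j) (hdet : G.det < 0)
    (μ : Fin 4 → ℝ)
    (hμ : ∀ A B C D : Fin 4, A ≠ B → A ≠ C → A ≠ D → B ≠ C → B ≠ D → C ≠ D →
      μ A = Real.sqrt ((-G.det) / (2 * G B C * G B D * G C D)))
    (Ghat : Fin 4 → Fin 4 → ℝ)
    (hGhat : ∀ A B : Fin 4, A ≠ B → Ghat A B = G A B / (μ A * μ B)) :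
    (∀ A : Fin 4, 0 < μ A)
    ∧ Ghat 0 3 = Ghat 1 2
    ∧ Ghat 0 2 = Ghat 1 3
    ∧ Ghat 0 1 = Ghat 2 3
    ∧ 0 < Ghat 0 3 ∧ 0 < Ghat 0 2 ∧ 0 < Ghat 0 1
    ∧ Ghat 0 3 ^ 4 + Ghat 0 2 ^ 4 + Ghat 0 1 ^ 4
        - 2 * Ghat 0 3 ^ 2 * Ghat 0 2 ^ 2
        - 2 * Ghat 0 3 ^ 2 * Ghat 0 1 ^ 2
        - 2 * Ghat 0 2 ^ 2 * Ghat 0 1 ^ 2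
        + 2 * Ghat 0 3 * Ghat 0 2 * Ghat 0 1 = 0 := by
  have hnorm : IsNormalization G μ Ghat := hGhat
  have hGhat_pos {A B : Fin 4} (hAB : A ≠ B) := hnorm.pos hμ hpos hdet hAB
  have hGhat_sq {A B C D : Fin 4} (h : [A, B, C, D].Nodup) := hnorm.sq_eq hμ hpos hdet h
  refine ⟨IsScaleParameter.pos hμ hpos hdet, hnorm.eq_of_nodup hμ hsymm hpos hdet (by decide),
    hnorm.eq_of_nodup hμ hsymm hpos hdet (by decide),
    hnorm.eq_of_nodup hμ hsymm hpos hdet (by decide), hGhat_pos (by decide),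
    hGhat_pos (by decide), hGhat_pos (by decide), ?_⟩
  refine quartic_eq_zero_of_sq (x := G 0 1 * G 2 3) (y := G 0 2 * G 1 3) (z := G 0 3 * G 1 2)
    (neg_pos.mpr hdet)
    (by rw [Matrix.det_fin_four_of_isSymm_of_diag_eq_zero_s19 hsymm hdiag]; ring)
    (hGhat_pos (by decide)).le (hGhat_pos (by decide)).le (hGhat_pos (by decide)).le ?_ ?_ ?_
  · rw [hGhat_sq (C := 1) (D := 2) (by decide), hsymm.apply 2 3, hsymm.apply 1 3]
  · rw [hGhat_sq (C := 1) (D := 3) (by decide), hsymm.apply 1 2]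
  · rw [hGhat_sq (C := 2) (D := 3) (by decide)]
end
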